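/- arXiv:1803.05141 — 2 statements merged into one kernel-verified Lean document; each statement's English description precedes it below -/
import Mathlib

section
/- If p is a prime with p ≡ 1 (mod 8) or p ≡ 7 (mod 8), then p divides B_{p-1}; and if p ≡ 3 (mod 8) or p ≡ 5 (mod 8), then p divides B_{p+1}, where B is the balancing sequence. -/
def B : ℕ → ℕ
  | 0 => 0
  | 1 => 1
  | (n + 2) => 6 * B (n + 1) - B n

/-! With α, β = 3 ± 2√2, the roots of x² - 6x + 1, Binet's formula B n * (α - β) = α ^ n - β ^ n
holds in every commutative ring. In a field of characteristic p containing √2, the Frobenius sends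
√2 to 2 ^ (p / 2) * √2 = (2 / p) √2. So it fixes α and β when 2 is a square mod p, giving
α ^ (p - 1) = β ^ (p - 1) = 1, and swaps them otherwise, giving α ^ (p + 1) = α β = β ^ (p + 1).
Either way α ^ m = β ^ m, and Binet's formula turns this into p ∣ B m. -/

open Polynomial

lemma B_le_B_succ (n : ℕ) : B n ≤ B (n + 1) := by
  induction n with
  | zero => simp [B]
  | succ n ih => show B (n + 1) ≤ 6 * B (n + 1) - B n; omega

section Binet

variable {R : Type*} [CommRing R]

lemma cast_B_add_two (n : ℕ) : (B (n + 2) : R) = 6 * B (n + 1) - B n := by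
  rw [B, Nat.cast_sub (by linarith [B_le_B_succ n]), Nat.cast_mul, Nat.cast_ofNat]

lemma B_mul_sub_eq_pow_sub_pow {α β : R} (hsum : α + β = 6) (hprod : α * β = 1) (n : ℕ) :
    B n * (α - β) = α ^ n - β ^ n := by
  induction n using Nat.twoStepInduction with
  | zero => simp [B]
  | one => simp [B]
  | more n ih₀ ih₁ =>
    rw [cast_B_add_two]
    linear_combination 6 * ih₁ - ih₀ + (β ^ n * β - α ^ n * α) * hsum + (α ^ n - β ^ n) * hprod

end Binet

section SqrtTwo

variable {p : ℕ} {K : Type*}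

lemma dvd_B_of_pow_eq_pow [Field K] [CharP K p] (hp : p ≠ 2) {s : K}
    (hs : s ^ 2 = 2) {m : ℕ} (h : (3 + 2 * s) ^ m = (3 - 2 * s) ^ m) : p ∣ B m := by
  have hbinet := B_mul_sub_eq_pow_sub_pow (α := 3 + 2 * s) (β := 3 - 2 * s) (by ring)
    (by linear_combination -4 * hs) m
  have h2 : (2 : K) ≠ 0 := Ring.two_ne_zero (by rwa [ringChar.eq K p])
  have hs0 : s ≠ 0 := by rintro rfl; exact h2 (by simpa using hs.symm)
  have hdiff : (3 + 2 * s) - (3 - 2 * s) ≠ 0 := by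
    rw [show (3 + 2 * s) - (3 - 2 * s) = 2 * s * 2 by ring]
    exact mul_ne_zero (mul_ne_zero h2 hs0) h2
  rw [h, sub_self] at hbinet
  exact (CharP.cast_eq_zero_iff K p _).mp ((mul_eq_zero.mp hbinet).resolve_right hdiff)

lemma three_add_two_mul_pow_char [CommRing K] [Fact p.Prime] [CharP K p] (hp : p ≠ 2) {s : K}
    (hs : s ^ 2 = 2) : (3 + 2 * s) ^ p = 3 + 2 * (2 ^ (p / 2) * s) := by
  have hsp : s ^ p = 2 ^ (p / 2) * s := by
    rw [← hs, ← pow_mul, ← pow_succ,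
      Nat.two_mul_div_two_add_one_of_odd ((Fact.out : p.Prime).odd_of_ne_two hp)]
  rw [← hsp, ← frobenius_def, map_add, map_mul, map_ofNat, map_ofNat, frobenius_def]

end SqrtTwo

variable {p : ℕ} [Fact p.Prime]

lemma not_isSquare_two (hp : p % 8 = 3 ∨ p % 8 = 5) : ¬IsSquare (2 : ZMod p) := by
  rw [ZMod.exists_sq_eq_two_iff (by omega)]
  omega

lemma two_pow_div_two_eq_neg_one (hp : p % 8 = 3 ∨ p % 8 = 5) : (2 : ZMod p) ^ (p / 2) = -1 := by
  have h2 : (2 : ZMod p) ≠ 0 := Ring.two_ne_zero (by rw [ZMod.ringChar_zmod_n]; omega)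
  exact (ZMod.pow_div_two_eq_neg_one_or_one p h2).resolve_left
    fun h => not_isSquare_two hp ((ZMod.euler_criterion p h2).mpr h)

lemma dvd_B_sub_one (hp : p % 8 = 1 ∨ p % 8 = 7) : p ∣ B (p - 1) := by
  have hp2 : p ≠ 2 := by omega
  obtain ⟨s, hs⟩ := (ZMod.exists_sq_eq_two_iff hp2).mpr hp
  have hprod : (3 + 2 * s) * (3 - 2 * s) = 1 := by linear_combination 4 * hs
  refine dvd_B_of_pow_eq_pow hp2 (by rw [hs, sq]) ?_
  rw [ZMod.pow_card_sub_one_eq_one (left_ne_zero_of_mul_eq_one hprod),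
    ZMod.pow_card_sub_one_eq_one (right_ne_zero_of_mul_eq_one hprod)]

lemma dvd_B_add_one (hp : p % 8 = 3 ∨ p % 8 = 5) : p ∣ B (p + 1) := by
  have hp2 : p ≠ 2 := by omega
  set f : (ZMod p)[X] := X ^ 2 - C 2
  have : Fact (Irreducible f) := ⟨X_pow_sub_C_irreducible_of_prime Nat.prime_two
    fun b hb => not_isSquare_two hp ⟨b, by rw [← hb, sq]⟩⟩
  have : CharP (AdjoinRoot f) p :=
    charP_of_injective_algebraMap (algebraMap (ZMod p) (AdjoinRoot f)).injective p
  have hs : AdjoinRoot.root f ^ 2 = 2 := by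
    simpa [f, sub_eq_zero, map_ofNat (AdjoinRoot.of f) 2] using AdjoinRoot.eval₂_root f
  have h2 : (2 : AdjoinRoot f) ^ (p / 2) = -1 := by
    have := congrArg (algebraMap (ZMod p) (AdjoinRoot f)) (two_pow_div_two_eq_neg_one hp)
    rwa [map_pow, map_neg, map_one, map_ofNat] at this
  have hα := three_add_two_mul_pow_char hp2 hs
  have hβ := three_add_two_mul_pow_char hp2 (s := -AdjoinRoot.root f) (by rw [neg_sq, hs])
  rw [h2, mul_neg, ← sub_eq_add_neg] at hβ
  rw [h2] at hα
  refine dvd_B_of_pow_eq_pow hp2 hs ?_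
  rw [pow_succ, pow_succ, hα, hβ]
  ring

theorem stmt5 : ∀ p : ℕ, p.Prime →
    ((p % 8 = 1 ∨ p % 8 = 7) → p ∣ B (p - 1)) ∧
    ((p % 8 = 3 ∨ p % 8 = 5) → p ∣ B (p + 1)) := by
  intro p hp
  have := Fact.mk hp
  exact ⟨dvd_B_sub_one, dvd_B_add_one⟩
end

section
/- For all natural numbers m ≥ 1 and n ≥ 1, B_{m+n} > B_m * B_n, where B is the balancing sequence. -/
lemma B_lt_B_succ (n : ℕ) : B n < B (n + 1) := by
  induction n with
  | zero => simp [B]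
  | succ n ih => rw [B]; omega

lemma B_strictMono : StrictMono B := strictMono_nat_of_lt_succ B_lt_B_succ

lemma B_add_two_add_B (n : ℕ) : B (n + 2) + B n = 6 * B (n + 1) := by
  have := B_lt_B_succ n
  rw [B]; omega

lemma five_mul_B_le_B_succ (n : ℕ) : 5 * B n ≤ B (n + 1) := by
  cases n with
  | zero => simp [B]
  | succ n =>
    show 5 * B (n + 1) ≤ B (n + 2)
    have := B_add_two_add_B n
    have := B_lt_B_succ n
    omega

lemma B_add_add_one_add_mul (m n : ℕ) :
    B (m + n + 1) + B m * B n = B (m + 1) * B (n + 1) := by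
  induction n generalizing m with
  | zero => simp [B]
  | succ n ih =>
    have ih' : B (m + n + 2) + B (m + 1) * B n = B (m + 2) * B (n + 1) := by
      simpa only [add_right_comm m 1 n] using ih (m + 1)
    linear_combination ih' + B (n + 1) * B_add_two_add_B m - B (m + 1) * B_add_two_add_B n

theorem stmt9 : ∀ m n : ℕ, 1 ≤ m → 1 ≤ n → B m * B n < B (m + n) := by
  intro m n hm hn
  obtain ⟨a, rfl⟩ := Nat.exists_eq_add_of_le' hm
  obtain ⟨b, rfl⟩ := Nat.exists_eq_add_of_le' hn
  have addition := B_add_add_one_add_mul (a + 1) b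
  have growth := five_mul_B_le_B_succ (a + 1)
  have hb := B_lt_B_succ b
  have ha_pos : 0 < B (a + 1) := B_strictMono a.succ_pos
  rw [← add_assoc]
  nlinarith [Nat.mul_le_mul_right (B (b + 1)) growth, Nat.mul_le_mul_left (B (a + 1)) hb.le,
    Nat.mul_pos ha_pos (B_strictMono b.succ_pos)]
end
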